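/- arXiv:2310.13443 — 2 statements merged into one kernel-verified Lean document; each statement's English description precedes it below -/
import Mathlib

section
/- Let $R = \prod_{i \in I} R_i$ be an arbitrary product of discrete valuation rings. Then every invertible $R$-module is free of rank one; i.e., the Picard group of $R$ is trivial. -/
open scoped TensorProduct

/-!
An invertible module `M` has functionals `φₖ` and elements `mₖ` with `∑ₖ φₖ mₖ = 1`. Over a product
of local rings, in each coordinate `i` some summand `φₖ mₖ` is a unit of `Rᵢ`; gluing the chosen
`φₖ` coordinatewise gives a functional `M → ∏ Rᵢ` that hits a unit, hence is surjective, hence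
bijective because `∏ Rᵢ` is invertible.
-/

namespace Module

theorem Invertible.exists_sum_apply_eq_one (R M : Type*) [CommSemiring R] [AddCommMonoid M]
    [Module R M] [Module.Invertible R M] :
    ∃ S : Finset (Dual R M × M), ∑ p ∈ S, p.1 p.2 = 1 := by
  obtain ⟨S, hS⟩ := ((Invertible.linearEquiv R M).symm 1).exists_finset
  exact ⟨S, by simpa [LinearEquiv.symm_apply_eq, Invertible.linearEquiv, eq_comm] using hS⟩

variable {I : Type*} {R : I → Type*} [∀ i, CommSemiring (R i)] {M : Type*} [AddCommMonoid M]
  [Module (∀ i, R i) M]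

def Dual.piecewise (φ : I → Dual (∀ i, R i) M) : Dual (∀ i, R i) M where
  toFun x i := φ i x i
  map_add' x y := by ext i; simp
  map_smul' a x := by ext i; simp

@[simp]
theorem Dual.piecewise_apply (φ : I → Dual (∀ i, R i) M) (x : M) (i : I) :
    Dual.piecewise φ x i = φ i x i := rfl

theorem Invertible.nonempty_linearEquiv_pi_of_isLocalRing [∀ i, IsLocalRing (R i)]
    [Module.Invertible (∀ i, R i) M] : Nonempty (M ≃ₗ[∀ i, R i] ∀ i, R i) := by
  classical
  obtain ⟨S, hS⟩ := Invertible.exists_sum_apply_eq_one (∀ i, R i) M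
  have hunit : ∀ i, ∃ p ∈ S, IsUnit (p.1 p.2 i) := fun i ↦
    IsLocalRing.exists_of_isUnit_sum (by simp [← Finset.sum_apply, hS])
  choose κ hκS hκ using hunit
  let f := Dual.piecewise fun i ↦ (κ i).1
  let m := ∑ p ∈ S, (fun i ↦ if κ i = p then 1 else 0 : ∀ i, R i) • p.2
  have hfm : ∀ i, f m i = (κ i).1 (κ i).2 i := fun i ↦ by
    simp [f, m, Finset.sum_apply, hκS]
  have hf : Function.Surjective f := LinearMap.range_eq_top.mp <|
    Ideal.eq_top_of_isUnit_mem _ ⟨m, rfl⟩ (Pi.isUnit_iff.mpr fun i ↦ hfm i ▸ hκ i)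
  exact ⟨.ofBijective f (Invertible.bijective_of_surjective hf)⟩

end Module

/-- for an arbitrary product `R = ∏ᵢ Rᵢ` of discrete valuation rings,
every invertible `R`-module is free of rank one, i.e. `Pic(R)` is trivial. -/
theorem stmt11 (I : Type*) (R : I → Type*) [∀ i, CommRing (R i)] [∀ i, IsDomain (R i)]
    [∀ i, IsDiscreteValuationRing (R i)]
    (M : Type*) [AddCommGroup M] [Module (∀ i, R i) M]
    (N : Type*) [AddCommGroup N] [Module (∀ i, R i) N]
    (e : (M ⊗[∀ i, R i] N) ≃ₗ[∀ i, R i] (∀ i, R i)) :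
    Nonempty (M ≃ₗ[∀ i, R i] (∀ i, R i)) :=
  have := Module.Invertible.left e
  Module.Invertible.nonempty_linearEquiv_pi_of_isLocalRing
end

section
/- Let $X$ be the set of closed points of a smooth projective irreducible curve over an algebraically closed field, and let $\mathbb{A}_X = \prod'_{x}(K_x, A_x)$ be the restricted product of the completed local fields $K_x$ with respect to their valuation rings $A_x$. Then the set of maximal ideals $\{I_x = \ker(\mathbb{A}_X \to K_x) : x \in X\}$ is dense in $\mathrm{Spec}(\mathbb{A}_X)$ with the Zariski topology. -/
/-- The geometric adele ring of a family of Laurent series fields indexed by the closed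
points: the subring of `∏ₓ k((z))` of families whose component lies in `k[[z]]` for all
but finitely many `x`. (Over an algebraically closed field every completed local field of
the curve is isomorphic to `k((z))`.) -/
noncomputable def adeleSubring (k : Type*) [Field k] (X : Type*) : Subring (X → LaurentSeries k) where
  carrier := {f | {x : X | f x ∉ (HahnSeries.ofPowerSeries ℤ k).range}.Finite}
  zero_mem' := by
    apply Set.Finite.subset Set.finite_empty
    intro x hx
    exact absurd (Subring.zero_mem _) hx
  one_mem' := by
    apply Set.Finite.subset Set.finite_empty
    intro x hx
    exact absurd (Subring.one_mem _) hx
  add_mem' := by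
    intro f g hf hg
    apply Set.Finite.subset (hf.union hg)
    intro x hx
    by_contra hc
    simp only [Set.mem_union, Set.mem_setOf_eq, not_or, not_not] at hc
    exact hx (Subring.add_mem _ hc.1 hc.2)
  mul_mem' := by
    intro f g hf hg
    apply Set.Finite.subset (hf.union hg)
    intro x hx
    by_contra hc
    simp only [Set.mem_union, Set.mem_setOf_eq, not_or, not_not] at hc
    exact hx (Subring.mul_mem _ hc.1 hc.2)
  neg_mem' := by
    intro f hf
    apply Set.Finite.subset hf
    intro x hx
    by_contra hc
    simp only [Set.mem_setOf_eq, not_not] at hc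
    exact hx (Subring.neg_mem _ hc)

/-- Evaluation of an adele at the closed point `x`, with values in the completed local
field `K_x = k((z))`. -/
noncomputable def adeleEval (k : Type*) [Field k] (X : Type*) (x : X) :
    adeleSubring k X →+* LaurentSeries k :=
  (Pi.evalRingHom (fun _ : X => LaurentSeries k) x).comp (Subring.subtype _)

/-! The primes `Iₓ` have zero intersection, since an adele is determined by its components;
hence their closure is `V(0) = Spec 𝔸_X`. -/

theorem PrimeSpectrum.dense_setOf_asIdeal_eq_ker {R ι : Type*} [CommRing R] {S : ι → Type*}
    [∀ i, CommRing (S i)] [∀ i, IsDomain (S i)] (φ : ∀ i, R →+* S i)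
    (hφ : Function.Injective (RingHom.pi φ)) :
    Dense {P : PrimeSpectrum R | ∃ i, P.asIdeal = RingHom.ker (φ i)} := by
  have hvanish : vanishingIdeal {P : PrimeSpectrum R | ∃ i, P.asIdeal = RingHom.ker (φ i)} = ⊥ := by
    refine le_bot_iff.mp fun r hr => ?_
    rw [← (RingHom.injective_iff_ker_eq_bot _).mp hφ, Pi.ker_ringHom, Submodule.mem_iInf]
    exact fun i => (mem_vanishingIdeal _ r).mp hr ⟨RingHom.ker (φ i), RingHom.ker_isPrime _⟩ ⟨i, rfl⟩
  rw [dense_iff_closure_eq, ← zeroLocus_vanishingIdeal_eq_closure, hvanish, zeroLocus_bot]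

theorem stmt12_general (k : Type*) [Field k] (X : Type*) :
    Dense {P : PrimeSpectrum (adeleSubring k X) |
      ∃ x : X, P.asIdeal = RingHom.ker (adeleEval k X x)} :=
  PrimeSpectrum.dense_setOf_asIdeal_eq_ker _ Subtype.val_injective

/-- the set of maximal ideals `Iₓ = ker(𝔸_X → K_x)`, for `x` a closed
point, is dense in `Spec(𝔸_X)` with the Zariski topology. -/
theorem stmt12 (k : Type*) [Field k] [IsAlgClosed k] (X : Type*) :
    Dense {P : PrimeSpectrum (adeleSubring k X) |
      ∃ x : X, P.asIdeal = RingHom.ker (adeleEval k X x)} :=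
  stmt12_general k X
end
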